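/- Let L and J be subspaces of a finite-dimensional complex inner product space H, let ι_L : L → H be the inclusion and P_{J^⊥} the orthogonal projection onto J^⊥. Then det((P_{J^⊥} ι_L)* (P_{J^⊥} ι_L)) ≤ 1, with equality if and only if L and J are orthogonal. -/

import Mathlib

/-!
In an orthonormal eigenbasis `b` of the positive operator `T†T`, its eigenvalues are
`‖T bᵢ‖² ∈ [0, 1]` when `T` is a contraction, so `det (T†T)`, their product, is at most `1`, with
equality iff every eigenvalue is `1`, i.e. `T†T = 1`, i.e. `T` is an isometry. For
`T = P_{Jᗮ} ι_L` we have `‖P_{Jᗮ} x‖ = ‖x‖` iff `x ∈ Jᗮ`, so `T` is an isometry iff `L ≤ Jᗮ`.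
-/

open scoped ComplexOrder

/-- The composition `P_{Jᗮ} ∘ ι_L : L → H` of the inclusion of `L` with the orthogonal
projection onto `Jᗮ`. -/
noncomputable def projIncl {H : Type*} [NormedAddCommGroup H] [InnerProductSpace ℂ H]
    [FiniteDimensional ℂ H] (L J : Submodule ℂ H) : ↥L →ₗ[ℂ] H :=
  Jᗮ.subtype ∘ₗ (Jᗮ.orthogonalProjection).toLinearMap ∘ₗ L.subtype

open Module
open scoped InnerProductSpace

theorem Real.prod_eq_one_iff_of_nonneg_of_le_one {ι : Type*} [Fintype ι] {f : ι → ℝ}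
    (h0 : ∀ i, 0 ≤ f i) (h1 : ∀ i, f i ≤ 1) : ∏ i, f i = 1 ↔ ∀ i, f i = 1 := by
  lift f to ι → NNReal using h0
  simp only [NNReal.coe_le_one] at h1
  simp only [← NNReal.coe_prod, NNReal.coe_eq_one]
  simpa using Finset.prod_eq_one_iff_of_le_one' (s := Finset.univ) fun i _ => h1 i

namespace LinearMap

variable {𝕜 E F : Type*} [RCLike 𝕜] [NormedAddCommGroup E] [InnerProductSpace 𝕜 E]
  [FiniteDimensional 𝕜 E] [NormedAddCommGroup F] [InnerProductSpace 𝕜 F] [FiniteDimensional 𝕜 F]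

theorem IsSymmetric.eq_one_of_eigenvalues_eq_one {A : E →ₗ[𝕜] E} (hA : A.IsSymmetric) {n : ℕ}
    (hn : finrank 𝕜 E = n) (h : ∀ i, hA.eigenvalues hn i = 1) : A = 1 :=
  (hA.eigenvectorBasis hn).toBasis.ext fun i => by simp [hA.apply_eigenvectorBasis, h]

theorem norm_map_iff_adjoint_comp_self (T : E →ₗ[𝕜] F) :
    (∀ x, ‖T x‖ = ‖x‖) ↔ adjoint T ∘ₗ T = 1 := by
  rw [norm_map_iff_inner_map_map]
  refine ⟨fun h => LinearMap.ext fun x => ext_inner_right 𝕜 fun y => ?_, fun h x y => ?_⟩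
  · simpa [adjoint_inner_left] using h x y
  · rw [← adjoint_inner_left, ← comp_apply, h, Module.End.one_apply]

theorem re_inner_adjoint_comp_self_apply (T : E →ₗ[𝕜] F) (x : E) :
    RCLike.re ⟪(adjoint T ∘ₗ T) x, x⟫_𝕜 = ‖T x‖ ^ 2 := by
  rw [comp_apply, adjoint_inner_left, inner_self_eq_norm_sq]

theorem eigenvalues_adjoint_comp_self (T : E →ₗ[𝕜] F) {n : ℕ} (hn : finrank 𝕜 E = n)
    (i : Fin n) :
    T.isPositive_adjoint_comp_self.isSymmetric.eigenvalues hn i =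
      ‖T (T.isPositive_adjoint_comp_self.isSymmetric.eigenvectorBasis hn i)‖ ^ 2 := by
  set hA := T.isPositive_adjoint_comp_self.isSymmetric
  rw [← re_inner_adjoint_comp_self_apply, hA.apply_eigenvectorBasis, inner_smul_real_left,
    RCLike.smul_re, inner_self_eq_norm_sq, (hA.eigenvectorBasis hn).norm_eq_one, one_pow, mul_one]

theorem eigenvalues_adjoint_comp_self_le_one {T : E →ₗ[𝕜] F} (hT : ∀ x, ‖T x‖ ≤ ‖x‖) {n : ℕ}
    (hn : finrank 𝕜 E = n) (i : Fin n) :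
    T.isPositive_adjoint_comp_self.isSymmetric.eigenvalues hn i ≤ 1 := by
  set b := T.isPositive_adjoint_comp_self.isSymmetric.eigenvectorBasis hn
  calc _ = ‖T (b i)‖ ^ 2 := eigenvalues_adjoint_comp_self T hn i
    _ ≤ ‖b i‖ ^ 2 := by gcongr; exact hT (b i)
    _ = 1 := by rw [b.norm_eq_one, one_pow]

theorem det_adjoint_comp_self_le_one {T : E →ₗ[𝕜] F} (hT : ∀ x, ‖T x‖ ≤ ‖x‖) :
    LinearMap.det (adjoint T ∘ₗ T) ≤ 1 := by
  have hA := T.isPositive_adjoint_comp_self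
  rw [hA.isSymmetric.det_eq_prod_eigenvalues rfl, ← RCLike.ofReal_prod, ← RCLike.ofReal_one,
    RCLike.ofReal_le_ofReal]
  exact Finset.prod_le_one (fun i _ => hA.nonneg_eigenvalues rfl i)
    fun i _ => eigenvalues_adjoint_comp_self_le_one hT rfl i

theorem det_adjoint_comp_self_eq_one_iff {T : E →ₗ[𝕜] F} (hT : ∀ x, ‖T x‖ ≤ ‖x‖) :
    LinearMap.det (adjoint T ∘ₗ T) = 1 ↔ ∀ x, ‖T x‖ = ‖x‖ := by
  have hA := T.isPositive_adjoint_comp_self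
  rw [norm_map_iff_adjoint_comp_self]
  refine ⟨fun h => hA.isSymmetric.eq_one_of_eigenvalues_eq_one rfl ?_, fun h => by rw [h, map_one]⟩
  rwa [hA.isSymmetric.det_eq_prod_eigenvalues rfl, ← RCLike.ofReal_prod, ← RCLike.ofReal_one,
    RCLike.ofReal_inj, Real.prod_eq_one_iff_of_nonneg_of_le_one (hA.nonneg_eigenvalues rfl)
      (eigenvalues_adjoint_comp_self_le_one hT rfl)] at h

end LinearMap

theorem projIncl_apply {H : Type*} [NormedAddCommGroup H] [InnerProductSpace ℂ H]
    [FiniteDimensional ℂ H] (L J : Submodule ℂ H) (x : L) :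
    projIncl L J x = Jᗮ.starProjection x :=
  rfl

/-- `det ((P_{Jᗮ} ι_L)* (P_{Jᗮ} ι_L)) ≤ 1`, with equality iff `L ⊥ J`: nonnegativity of the
log-determinant mutual information `I(L;J)`, vanishing exactly for orthogonal subspaces. -/
theorem stmt_10 {H : Type*} [NormedAddCommGroup H] [InnerProductSpace ℂ H]
    [FiniteDimensional ℂ H] (L J : Submodule ℂ H) :
    LinearMap.det (LinearMap.adjoint (projIncl L J) ∘ₗ projIncl L J) ≤ 1 ∧
      (LinearMap.det (LinearMap.adjoint (projIncl L J) ∘ₗ projIncl L J) = 1 ↔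
        ∀ x ∈ L, ∀ y ∈ J, (inner ℂ x y : ℂ) = 0) := by
  have hT : ∀ x : L, ‖projIncl L J x‖ ≤ ‖x‖ := fun x => by
    rw [projIncl_apply]
    exact Jᗮ.norm_starProjection_apply_le x
  refine ⟨LinearMap.det_adjoint_comp_self_le_one hT, ?_⟩
  rw [LinearMap.det_adjoint_comp_self_eq_one_iff hT, ← Submodule.isOrtho_iff_inner_eq,
    Submodule.isOrtho_iff_le, Subtype.forall]
  simp only [projIncl_apply]
  exact forall₂_congr fun x _ => (Jᗮ.mem_iff_norm_starProjection x).symm
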